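/- (Lemma 'large enough'.) Let m ≥ 1 and let v¹, v², v³ : Fin m → (Fin m → ℝ((t))) be three families of vectors in 𝕂^m satisfying the genericity condition that for every i, j, k ≥ 0 with i + j + k = m, the determinant Δ_{ijk} of the m×m matrix with columns v¹₀,…,v¹_{i−1}, v²₀,…,v²_{j−1}, v³₀,…,v³_{k−1} is nonzero. Then there exist λ¹, λ², λ³ : Fin m → ℤ with the following property. Set ṽ^a_l = t^{−λ^a_l} • v^a_l and let L'_a be the 𝒪-submodule of 𝕂^m spanned by {ṽ^a₀, …, ṽ^a_{m−1}}. Then for every i + j + k = m and all u : Fin i → 𝕂^m, w : Fin j → 𝕂^m, z : Fin k → 𝕂^m with every u_l ∈ L'₁, every w_l ∈ L'₂, every z_l ∈ L'₃ and with D(u,w,z) ≠ 0, one has ord(D(u,w,z)) ≥ ord(D(ṽ¹₀,…,ṽ¹_{i−1}, ṽ²₀,…,ṽ²_{j−1}, ṽ³₀,…,ṽ³_{k−1})); that is, −ord of the 'leading columns' determinant of the rescaled vectors simultaneously attains, for all (i,j,k), the maximum of −ord over all determinants of elements of the rescaled lattices (the rescaled vectors are a good lift). -/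

import Mathlib

open HahnSeries

/-- Given `i + j + k = m` and families `u : Fin i → 𝕂^m`, `w : Fin j → 𝕂^m`,
`z : Fin k → 𝕂^m`, `detCols` is the determinant of the `m × m` matrix whose columns
are `u₀, …, u_{i-1}, w₀, …, w_{j-1}, z₀, …, z_{k-1}`. -/
noncomputable def detCols {m i j k : ℕ} (h : i + j + k = m)
    (u : Fin i → Fin m → LaurentSeries ℝ) (w : Fin j → Fin m → LaurentSeries ℝ)
    (z : Fin k → Fin m → LaurentSeries ℝ) : LaurentSeries ℝ :=
  Matrix.det (Matrix.of fun r c =>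
    (Fin.append (Fin.append u w) z) (Fin.cast h.symm c) r)

/-!
Take the same coweight `λ_l = -N l` for all three families, where `N > 2B` and `B` bounds
`|ord|` of every `m × m` minor of the `3m` vectors `v^a_l`. Expanding a determinant of lattice
vectors multilinearly writes it as a power-series combination of minors of the rescaled
vectors in which column `c` is some `ṽ^{a_c}_{r_c}`, `a_c` being the block of `c`. Such a minor
has order `N ∑ r_c + ord det (v^{a_c}_{r_c})`. Within each block the positions `r_c` are
distinct, so `∑ r_c` is at least its value for the leading columns (positions `0, …, n - 1` in
a block of size `n`), with equality only for a permutation of the leading columns. Otherwise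
the sum grows by at least one, and the gain `N` beats the spread `2B` of the unscaled orders.
-/

open Finset Matrix

theorem Finset.sum_range_card_le_sum (s : Finset ℕ) : ∑ n ∈ range #s, n ≤ ∑ x ∈ s, x := by
  induction s using Finset.induction_on_max with
  | empty => simp
  | insert a s hlt ih =>
    have has : a ∉ s := fun h => (hlt a h).false
    have hcard : #s ≤ a := by simpa using card_le_card fun x hx => mem_range.2 (hlt x hx)
    rw [card_insert_of_notMem has, sum_range_succ, sum_insert has]
    omega

theorem Finset.eq_range_card_of_sum_le {s : Finset ℕ} (hs : ∑ x ∈ s, x ≤ ∑ n ∈ range #s, n) :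
    s = range #s := by
  induction s using Finset.induction_on_max with
  | empty => simp
  | insert a s hlt ih =>
    have has : a ∉ s := fun h => (hlt a h).false
    have hcard : #s ≤ a := by simpa using card_le_card fun x hx => mem_range.2 (hlt x hx)
    have := s.sum_range_card_le_sum
    rw [card_insert_of_notMem has, sum_range_succ, sum_insert has] at hs
    rw [card_insert_of_notMem has, range_add_one, ih (by omega), card_range, show a = #s by omega]

theorem Function.Injective.exists_perm_comp_eq {ι X : Type*} [Finite ι] {g g₀ : ι → X}
    (hg : Function.Injective g) (h : ∀ c, ∃ c', g₀ c' = g c) :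
    ∃ σ : Equiv.Perm ι, g₀ ∘ σ = g := by
  choose σ hσ using h
  have hσinj : Function.Injective σ := fun c c' hcc' => hg <| by rw [← hσ, ← hσ, hcc']
  exact ⟨Equiv.ofBijective σ (Finite.injective_iff_bijective.mp hσinj), funext hσ⟩

section Packed

variable {ι κ : Type*} [Fintype ι] [DecidableEq κ] {β : ι → κ} {ρ ρ₀ : ι → ℕ}

/-- On each fibre of `β`, of size `n` say, `ρ₀` is a bijection onto `{0, …, n - 1}`: these are
the positions of the leading columns of a block. -/
def IsPackedIn (β : ι → κ) (ρ₀ : ι → ℕ) : Prop :=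
  Function.Injective (fun c => (β c, ρ₀ c)) ∧ ∀ c n, n < ρ₀ c → ∃ c', β c' = β c ∧ ρ₀ c' = n

theorem card_image_fiber (hρ : Function.Injective fun c => (β c, ρ c)) (a : κ) :
    #(({c | β c = a} : Finset ι).image ρ) = #({c | β c = a} : Finset ι) :=
  card_image_of_injOn fun _ hc _ hc' h =>
    hρ (Prod.ext ((mem_filter.1 hc).2.trans (mem_filter.1 hc').2.symm) h)

theorem sum_eq_sum_sum_image_fiber [Fintype κ] (hρ : Function.Injective fun c => (β c, ρ c)) :
    ∑ c, ρ c = ∑ a, ∑ x ∈ ({c | β c = a} : Finset ι).image ρ, x := by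
  rw [← Finset.sum_fiberwise univ β ρ]
  refine sum_congr rfl fun a _ => ?_
  rw [sum_image fun _ hc _ hc' h => ?_]
  exact hρ (Prod.ext ((mem_filter.1 hc).2.trans (mem_filter.1 hc').2.symm) h)

theorem IsPackedIn.image_fiber (h : IsPackedIn β ρ₀) (a : κ) :
    ({c | β c = a} : Finset ι).image ρ₀ = range #({c | β c = a} : Finset ι) := by
  set T := ({c | β c = a} : Finset ι).image ρ₀
  rw [← card_image_fiber h.1]
  refine eq_of_subset_of_card_le (fun x hx => mem_range.2 ?_) (by rw [card_range])
  obtain ⟨c, hc, rfl⟩ := mem_image.1 hx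
  have hsub : range (ρ₀ c + 1) ⊆ T := fun n hn => by
    rcases (Nat.lt_succ_iff.1 (mem_range.1 hn)).lt_or_eq with hn | rfl
    · obtain ⟨c', hβ, rfl⟩ := h.2 c n hn
      exact mem_image_of_mem _ (mem_filter.2 ⟨mem_univ _, hβ.trans (mem_filter.1 hc).2⟩)
    · exact hx
  simpa using card_le_card hsub

theorem IsPackedIn.sum_image_fiber_le (h : IsPackedIn β ρ₀)
    (hρ : Function.Injective fun c => (β c, ρ c)) (a : κ) :
    ∑ x ∈ ({c | β c = a} : Finset ι).image ρ₀, x ≤ ∑ x ∈ ({c | β c = a} : Finset ι).image ρ, x := by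
  rw [h.image_fiber, ← card_image_fiber hρ]
  exact sum_range_card_le_sum _

variable [Fintype κ]

theorem IsPackedIn.sum_le (h : IsPackedIn β ρ₀) (hρ : Function.Injective fun c => (β c, ρ c)) :
    ∑ c, ρ₀ c ≤ ∑ c, ρ c := by
  rw [sum_eq_sum_sum_image_fiber h.1, sum_eq_sum_sum_image_fiber hρ]
  exact sum_le_sum fun a _ => h.sum_image_fiber_le hρ a

theorem IsPackedIn.exists_perm_of_sum_le (h : IsPackedIn β ρ₀)
    (hρ : Function.Injective fun c => (β c, ρ c)) (hle : ∑ c, ρ c ≤ ∑ c, ρ₀ c) :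
    ∃ σ : Equiv.Perm ι, (fun c => (β c, ρ₀ c)) ∘ σ = fun c => (β c, ρ c) := by
  have hfiber (a : κ) :
      ({c | β c = a} : Finset ι).image ρ = ({c | β c = a} : Finset ι).image ρ₀ := by
    have hsum := le_antisymm (h.sum_le hρ) hle
    rw [sum_eq_sum_sum_image_fiber h.1, sum_eq_sum_sum_image_fiber hρ] at hsum
    have ha := (sum_eq_sum_iff_of_le fun a _ => h.sum_image_fiber_le hρ a).1 hsum a (mem_univ a)
    rw [h.image_fiber, ← card_image_fiber hρ] at ha ⊢
    exact eq_range_card_of_sum_le ha.ge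
  refine hρ.exists_perm_comp_eq fun c => ?_
  have hc : ρ c ∈ ({c' | β c' = β c} : Finset ι).image ρ :=
    mem_image_of_mem ρ (mem_filter.2 ⟨mem_univ c, rfl⟩)
  obtain ⟨c', hc', hρc'⟩ := mem_image.1 (hfiber (β c) ▸ hc)
  exact ⟨c', Prod.ext (mem_filter.1 hc').2 hρc'⟩

end Packed

theorem MultilinearMap.map_mem_of_forall_mem_span {R ι N : Type*} {M Y : ι → Type*}
    [CommSemiring R] [Fintype ι] [DecidableEq ι] [∀ c, Fintype (Y c)]
    [∀ c, AddCommMonoid (M c)] [∀ c, Module R (M c)] [AddCommMonoid N] [Module R N]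
    (f : MultilinearMap R M N) (P : Submodule R N) (g : ∀ c, Y c → M c) {x : ∀ c, M c}
    (hx : ∀ c, x c ∈ Submodule.span R (Set.range (g c)))
    (hg : ∀ r : ∀ c, Y c, f (fun c => g c (r c)) ∈ P) : f x ∈ P := by
  choose p hp using fun c => (Submodule.mem_span_range_iff_exists_fun R).1 (hx c)
  rw [show x = fun c => ∑ y, p c y • g c y from funext fun c => (hp c).symm, f.map_sum]
  exact P.sum_mem fun r _ => by rw [f.map_smul_univ]; exact P.smul_mem _ (hg r)

theorem HahnSeries.prod_single_one {Γ R ι : Type*} [AddCommMonoid Γ] [PartialOrder Γ]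
    [IsOrderedCancelAddMonoid Γ] [CommSemiring R] (s : Finset ι) (e : ι → Γ) :
    ∏ c ∈ s, (single (e c) 1 : HahnSeries Γ R) = single (∑ c ∈ s, e c) 1 := by
  classical
  induction s using Finset.induction_on with
  | empty => simp
  | insert a s ha ih => rw [prod_insert ha, sum_insert ha, ih, single_mul_single, mul_one]

namespace LaurentSeries

variable {R : Type*} [CommSemiring R]

theorem orderTop_ofPowerSeries_nonneg (p : PowerSeries R) :
    0 ≤ (ofPowerSeries ℤ R p).orderTop := by
  rw [ofPowerSeries_apply, orderTop_embDomain]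
  cases (toPowerSeries.symm p).orderTop <;> simp

def orderTopGE (d : ℤ) : Submodule (PowerSeries R) (LaurentSeries R) where
  carrier := {x | (d : WithTop ℤ) ≤ x.orderTop}
  zero_mem' := by simp
  add_mem' {x y} hx hy := by
    rw [Set.mem_ofPred_eq] at *
    exact (le_min hx hy).trans min_orderTop_le_orderTop_add
  smul_mem' p x hx := by
    rw [Set.mem_ofPred_eq] at *
    rw [Algebra.smul_def, coe_algebraMap, ← zero_add (d : WithTop ℤ)]
    exact (add_le_add (orderTop_ofPowerSeries_nonneg p) hx).trans orderTop_add_le_mul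

end LaurentSeries

section Rescale

variable {F : Type*} [Field F] {m : ℕ} {κ : Type*}

noncomputable def rescale (lam : Fin m → ℤ) (V : κ × Fin m → Fin m → LaurentSeries F) :
    κ × Fin m → Fin m → LaurentSeries F :=
  fun p => (single (-lam p.2) 1 : LaurentSeries F) • V p

theorem detRowAlternating_rescale_comp (lam : Fin m → ℤ)
    (V : κ × Fin m → Fin m → LaurentSeries F) (g : Fin m → κ × Fin m) :
    detRowAlternating (rescale lam V ∘ g) =
      single (-∑ c, lam (g c).2) 1 * detRowAlternating (V ∘ g) := by
  rw [show rescale lam V ∘ g = fun c => (single (-lam (g c).2) 1 : LaurentSeries F) • V (g c)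
    from rfl, AlternatingMap.map_smul_univ, prod_single_one, sum_neg_distrib, smul_eq_mul]
  rfl

theorem detRowAlternating_rescale_comp_ne_zero {lam : Fin m → ℤ}
    {V : κ × Fin m → Fin m → LaurentSeries F} {g : Fin m → κ × Fin m}
    (hg : detRowAlternating (V ∘ g) ≠ 0) : detRowAlternating (rescale lam V ∘ g) ≠ 0 := by
  rw [detRowAlternating_rescale_comp]
  exact mul_ne_zero (single_ne_zero one_ne_zero) hg

def linearCoweight (N : ℤ) : Fin m → ℤ := fun l => -(N * l)

theorem order_detRowAlternating_rescale_linearCoweight (N : ℤ)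
    (V : κ × Fin m → Fin m → LaurentSeries F) {g : Fin m → κ × Fin m}
    (hg : detRowAlternating (V ∘ g) ≠ 0) :
    (detRowAlternating (rescale (linearCoweight N) V ∘ g)).order =
      N * ∑ c, ((g c).2 : ℤ) + (detRowAlternating (V ∘ g)).order := by
  rw [detRowAlternating_rescale_comp, order_mul (single_ne_zero one_ne_zero) hg,
    order_single one_ne_zero]
  simp [linearCoweight, mul_sum]

end Rescale

section GoodLift

variable {F : Type*} [Field F] {m : ℕ} {κ : Type*} [Fintype κ] [DecidableEq κ]
  {V : κ × Fin m → Fin m → LaurentSeries F} {B N : ℤ} {β : Fin m → κ} {ρ₀ : Fin m → Fin m}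

theorem order_detRowAlternating_rescale_le (hN : 2 * B < N)
    (hB : ∀ g : Fin m → κ × Fin m, |(detRowAlternating (V ∘ g)).order| ≤ B)
    (hρ₀ : IsPackedIn β fun c => (ρ₀ c : ℕ))
    (h₀ : detRowAlternating (V ∘ fun c => (β c, ρ₀ c)) ≠ 0) (r : Fin m → Fin m) :
    ((detRowAlternating (rescale (linearCoweight N) V ∘ fun c => (β c, ρ₀ c))).order :
        WithTop ℤ) ≤
      (detRowAlternating (rescale (linearCoweight N) V ∘ fun c => (β c, r c))).orderTop := by
  have h₀' := detRowAlternating_rescale_comp_ne_zero (lam := linearCoweight N) h₀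
  by_cases hr : detRowAlternating (V ∘ fun c => (β c, r c)) = 0
  · rw [detRowAlternating_rescale_comp _ _ fun c => (β c, r c), hr, mul_zero, orderTop_zero]
    exact le_top
  have hval : Function.Injective (Prod.map id Fin.val : κ × Fin m → κ × ℕ) :=
    Function.injective_id.prodMap Fin.val_injective
  have hinj : Function.Injective (V ∘ fun c => (β c, r c)) := by
    by_contra hni
    exact hr (detRowAlternating.map_eq_zero_of_not_injective _ hni)
  rcases le_or_gt (∑ c, (r c : ℕ)) (∑ c, (ρ₀ c : ℕ)) with hle | hlt
  · obtain ⟨σ, hσ⟩ := hρ₀.exists_perm_of_sum_le (hval.comp hinj.of_comp) hle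
    have hσ' : (fun c => (β c, r c)) = (fun c => (β c, ρ₀ c)) ∘ σ := hval.comp_left <|
      show Prod.map id Fin.val ∘ (fun c => (β c, r c)) =
        Prod.map id Fin.val ∘ ((fun c => (β c, ρ₀ c)) ∘ σ) from hσ.symm
    rw [hσ', ← Function.comp_assoc, AlternatingMap.map_perm,
      order_eq_orderTop_of_ne_zero h₀']
    rcases Int.units_eq_one_or (Equiv.Perm.sign σ) with hs | hs <;> simp [hs]
  · have hr' := detRowAlternating_rescale_comp_ne_zero (lam := linearCoweight N) hr
    rw [← order_eq_orderTop_of_ne_zero hr', WithTop.coe_le_coe,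
      order_detRowAlternating_rescale_linearCoweight N V h₀,
      order_detRowAlternating_rescale_linearCoweight N V hr]
    have hsum : ∑ c, ((ρ₀ c : ℕ) : ℤ) + 1 ≤ ∑ c, ((r c : ℕ) : ℤ) := by exact_mod_cast hlt
    have hB₀ := abs_le.1 (hB fun c => (β c, ρ₀ c))
    have hBr := abs_le.1 (hB fun c => (β c, r c))
    nlinarith

theorem order_detRowAlternating_rescale_le_of_mem_span (hN : 2 * B < N)
    (hB : ∀ g : Fin m → κ × Fin m, |(detRowAlternating (V ∘ g)).order| ≤ B)
    (hρ₀ : IsPackedIn β fun c => (ρ₀ c : ℕ))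
    (h₀ : detRowAlternating (V ∘ fun c => (β c, ρ₀ c)) ≠ 0)
    {x : Fin m → Fin m → LaurentSeries F}
    (hx : ∀ c, x c ∈ Submodule.span (PowerSeries F)
      (Set.range fun l => rescale (linearCoweight N) V (β c, l))) :
    ((detRowAlternating (rescale (linearCoweight N) V ∘ fun c => (β c, ρ₀ c))).order :
        WithTop ℤ) ≤ (detRowAlternating x).orderTop :=
  ((detRowAlternating : (Fin m → LaurentSeries F) [⋀^Fin m]→ₗ[LaurentSeries F] LaurentSeries F)
    |>.toMultilinearMap.restrictScalars (PowerSeries F)).map_mem_of_forall_mem_span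
    (LaurentSeries.orderTopGE _) (fun c l => rescale (linearCoweight N) V (β c, l)) hx
    (order_detRowAlternating_rescale_le hN hB hρ₀ h₀)

end GoodLift

theorem Fin.comp_append {α γ : Type*} {p q : ℕ} (f : α → γ) (a : Fin p → α) (b : Fin q → α) :
    f ∘ Fin.append a b = Fin.append (f ∘ a) (f ∘ b) :=
  funext <| Fin.addCases (by simp) (by simp)

section LeadingColumns

variable {m i j k : ℕ}

theorem left_le_of_add_add_eq (h : i + j + k = m) : i ≤ m := by omega

theorem mid_le_of_add_add_eq (h : i + j + k = m) : j ≤ m := by omega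

theorem right_le_of_add_add_eq (h : i + j + k = m) : k ≤ m := by omega

theorem detCols_eq_detRowAlternating (h : i + j + k = m) (u : Fin i → Fin m → LaurentSeries ℝ)
    (w : Fin j → Fin m → LaurentSeries ℝ) (z : Fin k → Fin m → LaurentSeries ℝ) :
    detCols h u w z =
      detRowAlternating fun c => Fin.append (Fin.append u w) z (Fin.cast h.symm c) := by
  rw [detCols, ← det_transpose]
  rfl

def leadingChoice (h : i + j + k = m) : Fin m → Fin 3 × Fin m :=
  Fin.append (Fin.append (fun l => (0, Fin.castLE (left_le_of_add_add_eq h) l))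
    (fun l => (1, Fin.castLE (mid_le_of_add_add_eq h) l)))
    (fun l => (2, Fin.castLE (right_le_of_add_add_eq h) l)) ∘ Fin.cast h.symm

theorem detCols_castLE (h : i + j + k = m) (V : Fin 3 × Fin m → Fin m → LaurentSeries ℝ) :
    detCols h (fun l => V (0, Fin.castLE (left_le_of_add_add_eq h) l))
      (fun l => V (1, Fin.castLE (mid_le_of_add_add_eq h) l))
      (fun l => V (2, Fin.castLE (right_le_of_add_add_eq h) l)) =
      detRowAlternating (V ∘ leadingChoice h) := by
  rw [detCols_eq_detRowAlternating, leadingChoice, ← Function.comp_assoc, Fin.comp_append,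
    Fin.comp_append]
  rfl

theorem isPackedIn_leadingChoice (h : i + j + k = m) :
    IsPackedIn (fun c => (leadingChoice h c).1) fun c => ((leadingChoice h c).2 : ℕ) := by
  subst h
  have hoffset : ∀ c : Fin (i + j + k),
      (c : ℕ) = ![0, i, i + j] (leadingChoice rfl c).1 + (leadingChoice rfl c).2 := by
    simp [Fin.forall_fin_add, leadingChoice]
  refine ⟨fun c c' hcc' => Fin.ext ?_, ?_⟩
  · have hfst : (leadingChoice rfl c).1 = (leadingChoice rfl c').1 := (Prod.ext_iff.1 hcc').1
    have hsnd : ((leadingChoice rfl c).2 : ℕ) = (leadingChoice rfl c').2 :=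
      (Prod.ext_iff.1 hcc').2
    rw [hoffset c, hoffset c', hfst, hsnd]
  · simp only [Fin.forall_fin_add, leadingChoice, Function.comp_apply, Fin.cast_eq_self,
      Fin.append_left, Fin.append_right, Fin.val_castLE]
    refine ⟨⟨fun l n hn => ⟨Fin.castAdd k (Fin.castAdd j ⟨n, hn.trans l.2⟩), ?_⟩,
      fun l n hn => ⟨Fin.castAdd k (Fin.natAdd i ⟨n, hn.trans l.2⟩), ?_⟩⟩,
      fun l n hn => ⟨Fin.natAdd (i + j) ⟨n, hn.trans l.2⟩, ?_⟩⟩ <;>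
    simp only [Fin.append_left, Fin.append_right, Fin.val_castLE, and_self]

theorem append_mem_of_leadingChoice (h : i + j + k = m) {X S : Type*} [SetLike S X]
    (L : Fin 3 → S) {u : Fin i → X} {w : Fin j → X} {z : Fin k → X}
    (hu : ∀ l, u l ∈ L 0) (hw : ∀ l, w l ∈ L 1) (hz : ∀ l, z l ∈ L 2) (c : Fin m) :
    Fin.append (Fin.append u w) z (Fin.cast h.symm c) ∈ L (leadingChoice h c).1 := by
  subst h
  revert c
  simp [Fin.forall_fin_add, leadingChoice, hu, hw, hz]

end LeadingColumns

/-- Lemma "large enough": if `v¹, v², v³` are three families of vectors in `𝕂^m` such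
that every determinant `Δ_{ijk}` with columns `v¹₀, …, v¹_{i-1}, v²₀, …, v²_{j-1},
v³₀, …, v³_{k-1}` (for `i + j + k = m`) is nonzero, then there are coweights
`λ¹, λ², λ³` such that the rescaled vectors `ṽ^a_l = t^{-λ^a_l} • v^a_l` are a good
lift: for every `i + j + k = m`, every nonzero determinant of elements of the
`𝒪`-lattices spanned by the `ṽ^a` has order at least that of the (nonzero) determinant
of the leading columns of the `ṽ^a`. -/
theorem exists_good_lift {m : ℕ}
    (v₁ v₂ v₃ : Fin m → (Fin m → LaurentSeries ℝ))
    (hgen : ∀ (i j k : ℕ) (h : i + j + k = m),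
      detCols h (fun l => v₁ (Fin.castLE (by omega) l))
        (fun l => v₂ (Fin.castLE (by omega) l))
        (fun l => v₃ (Fin.castLE (by omega) l)) ≠ 0) :
    ∃ lam₁ lam₂ lam₃ : Fin m → ℤ,
      ∀ (i j k : ℕ) (h : i + j + k = m),
        (detCols h
            (fun l => (HahnSeries.single (-lam₁ (Fin.castLE (by omega) l)) (1 : ℝ) :
                LaurentSeries ℝ) • v₁ (Fin.castLE (by omega) l))
            (fun l => (HahnSeries.single (-lam₂ (Fin.castLE (by omega) l)) (1 : ℝ) :
                LaurentSeries ℝ) • v₂ (Fin.castLE (by omega) l))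
            (fun l => (HahnSeries.single (-lam₃ (Fin.castLE (by omega) l)) (1 : ℝ) :
                LaurentSeries ℝ) • v₃ (Fin.castLE (by omega) l)) ≠ 0) ∧
        ∀ (u : Fin i → Fin m → LaurentSeries ℝ) (w : Fin j → Fin m → LaurentSeries ℝ)
          (z : Fin k → Fin m → LaurentSeries ℝ),
          (∀ l, u l ∈ Submodule.span (PowerSeries ℝ)
            (Set.range (fun a : Fin m =>
              (HahnSeries.single (-lam₁ a) (1 : ℝ) : LaurentSeries ℝ) • v₁ a))) →
          (∀ l, w l ∈ Submodule.span (PowerSeries ℝ)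
            (Set.range (fun a : Fin m =>
              (HahnSeries.single (-lam₂ a) (1 : ℝ) : LaurentSeries ℝ) • v₂ a))) →
          (∀ l, z l ∈ Submodule.span (PowerSeries ℝ)
            (Set.range (fun a : Fin m =>
              (HahnSeries.single (-lam₃ a) (1 : ℝ) : LaurentSeries ℝ) • v₃ a))) →
          detCols h u w z ≠ 0 →
          (detCols h
              (fun l => (HahnSeries.single (-lam₁ (Fin.castLE (by omega) l)) (1 : ℝ) :
                  LaurentSeries ℝ) • v₁ (Fin.castLE (by omega) l))
              (fun l => (HahnSeries.single (-lam₂ (Fin.castLE (by omega) l)) (1 : ℝ) :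
                  LaurentSeries ℝ) • v₂ (Fin.castLE (by omega) l))
              (fun l => (HahnSeries.single (-lam₃ (Fin.castLE (by omega) l)) (1 : ℝ) :
                  LaurentSeries ℝ) • v₃ (Fin.castLE (by omega) l))).order ≤
            (detCols h u w z).order := by
  set V : Fin 3 × Fin m → Fin m → LaurentSeries ℝ := Function.uncurry ![v₁, v₂, v₃]
  obtain ⟨B, hB⟩ := Finite.exists_le fun g : Fin m → Fin 3 × Fin m =>
    |(detRowAlternating (V ∘ g)).order|
  set lam := linearCoweight (m := m) (2 * B + 1)
  refine ⟨lam, lam, lam, fun i j k h => ?_⟩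
  have h₀ : detRowAlternating (V ∘ leadingChoice h) ≠ 0 := by
    rw [← detCols_castLE]
    exact hgen i j k h
  -- `rescale lam V (a, l)` unfolds to the statement's `t^{-λ_l} • v_a l`, so the `rwa`s below
  -- close their goals up to definitional unfolding.
  refine ⟨?_, fun u w z hu hw hz hD => ?_⟩
  · have h₀' := detRowAlternating_rescale_comp_ne_zero (lam := lam) h₀
    rwa [← detCols_castLE] at h₀'
  · have key := order_detRowAlternating_rescale_le_of_mem_span (lt_add_one _) hB
      (isPackedIn_leadingChoice h) h₀ <| append_mem_of_leadingChoice h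
        (fun a => Submodule.span (PowerSeries ℝ) (Set.range fun l => rescale lam V (a, l)))
        hu hw hz
    rwa [← detCols_castLE, ← detCols_eq_detRowAlternating h, ← order_eq_orderTop_of_ne_zero hD,
      WithTop.coe_le_coe] at key
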